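/- If Γ is a connected simple graph on {1,...,n}, then the subgraph of η (the GKM graph of Q_{Γ,λ}) induced on vertices {(σ,s) ∈ S_n × (ℤ/2)^n : s_1 + ... + s_n = 0} is connected. -/

import Mathlib

/-!
Along an edge `{i,j}` of Γ, η multiplies `σ` on the right by `(i j)` and adds either `0` or
`eᵢ + eⱼ` to `s`. The right translations `σ ↦ στ` (resp. `s ↦ s + d`) that never leave a
connected component of η form a subgroup. It contains the transpositions along edges of Γ, which
generate `S_n`, and, by going along an edge `{i,j}` and back, the vectors `eᵢ + eⱼ`, which
generate the vectors of coordinate sum `0` since Γ is connected. As edges of η preserve `∑ s`,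
the component of `(1, 0)` is exactly the set of vertices of parity `0`.
-/

/-- Adjacency in the GKM graph `η` of `Q_{Γ,λ}`: `(σ,s)` and `(τ,s')` are adjacent
iff there are `i < j` with `{i,j} ∈ E_Γ`, `τ = σ·(i j)`, `s` and `s'` agree outside
`{i,j}`, and `sᵢ + sⱼ = s'ᵢ + s'ⱼ` in `ℤ/2`. -/
def etaAdj {n : ℕ} (G : SimpleGraph (Fin n))
    (v w : Equiv.Perm (Fin n) × (Fin n → ZMod 2)) : Prop :=
  ∃ i j : Fin n, i < j ∧ G.Adj i j ∧ w.1 = v.1 * Equiv.swap i j ∧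
    (∀ k, k ≠ i → k ≠ j → w.2 k = v.2 k) ∧ w.2 i + w.2 j = v.2 i + v.2 j

open Equiv SimpleGraph

section Generation

variable {α : Type*} [DecidableEq α] {G : SimpleGraph α}

theorem SimpleGraph.Reachable.swap_mem {C : Type*} [SetLike C (Perm α)]
    [SubmonoidClass C (Perm α)] (M : C) (hM : ∀ ⦃i j⦄, G.Adj i j → swap i j ∈ M)
    {x y : α} (hxy : G.Reachable x y) : swap x y ∈ M := by
  obtain ⟨p⟩ := hxy
  induction p with
  | nil => rw [swap_self]; exact one_mem M
  | cons h _ ih => exact SubmonoidClass.swap_mem_trans M (hM h) ih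

theorem SimpleGraph.Connected.closure_swap_adj_eq_top [Finite α] (hG : G.Connected) :
    Subgroup.closure {σ : Perm α | ∃ i j, G.Adj i j ∧ σ = swap i j} = ⊤ := by
  rw [eq_top_iff, ← Perm.closure_isSwap, Subgroup.closure_le]
  rintro _ ⟨x, y, -, rfl⟩
  refine (hG x y).swap_mem (Subgroup.closure _) fun i j hij ↦ Subgroup.subset_closure ?_
  exact ⟨i, j, hij, rfl⟩

theorem SimpleGraph.Reachable.single_add_single_mem (M : AddSubgroup (α → ZMod 2))
    (hM : ∀ ⦃i j⦄, G.Adj i j → Pi.single i 1 + Pi.single j 1 ∈ M) {x y : α}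
    (hxy : G.Reachable x y) : Pi.single x 1 + Pi.single y 1 ∈ M := by
  obtain ⟨p⟩ := hxy
  induction p with
  | nil => rw [ZModModule.add_self]; exact M.zero_mem
  | @cons _ v _ h _ ih =>
    have := M.add_mem (hM h) ih
    rwa [add_assoc, ← add_assoc (Pi.single v 1), ZModModule.add_self, zero_add] at this

theorem AddSubgroup.mem_of_sum_eq_zero [Fintype α] (M : AddSubgroup (α → ZMod 2))
    (hM : ∀ i j, Pi.single i 1 + Pi.single j 1 ∈ M) {d : α → ZMod 2} (hd : ∑ k, d k = 0) :
    d ∈ M := by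
  cases isEmpty_or_nonempty α with
  | inl _ => exact Subsingleton.elim 0 d ▸ M.zero_mem
  | inr h =>
    obtain ⟨i₀⟩ := h
    have hd' : d = ∑ k, d k • (Pi.single k 1 + Pi.single i₀ 1) := by
      simp only [smul_add, Finset.sum_add_distrib, ← Finset.sum_smul, hd, zero_smul, add_zero]
      exact pi_eq_sum_univ' d
    rw [hd']
    exact M.sum_mem fun k _ ↦ ZMod.smul_mem (hM k i₀) (d k)

end Generation

section Eta

variable {n : ℕ} {G : SimpleGraph (Fin n)}

theorem sum_eq_of_etaAdj {v w : Perm (Fin n) × (Fin n → ZMod 2)} (h : etaAdj G v w) :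
    ∑ k, w.2 k = ∑ k, v.2 k := by
  obtain ⟨i, j, hij, -, -, hout, hsum⟩ := h
  have hdiff : ∑ k, (w.2 k - v.2 k) = 0 := by
    rw [Fintype.sum_eq_add i j hij.ne]
    · linear_combination hsum
    · rintro k ⟨hki, hkj⟩
      rw [hout k hki hkj, sub_self]
  rwa [Finset.sum_sub_distrib, sub_eq_zero] at hdiff

theorem SimpleGraph.Reachable.sum_eq_of_fromRel_etaAdj {v w : Perm (Fin n) × (Fin n → ZMod 2)}
    (h : (fromRel (etaAdj G)).Reachable v w) : ∑ k, v.2 k = ∑ k, w.2 k := by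
  obtain ⟨p⟩ := h
  induction p with
  | nil => rfl
  | cons h _ ih =>
    rw [← ih]
    obtain ⟨-, h | h⟩ := fromRel_adj _ _ _ |>.mp h
    · exact (sum_eq_of_etaAdj h).symm
    · exact sum_eq_of_etaAdj h

theorem fromRel_etaAdj_adj_mul_swap {i j : Fin n} (hij : G.Adj i j) (σ : Perm (Fin n))
    (s : Fin n → ZMod 2) {d : Fin n → ZMod 2} (hd_out : ∀ k, k ≠ i → k ≠ j → d k = 0)
    (hd : d i + d j = 0) : (fromRel (etaAdj G)).Adj (σ, s) (σ * swap i j, s + d) := by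
  refine (fromRel_adj _ _ _).mpr ⟨fun h ↦ hij.ne ?_, Or.inl ?_⟩
  · exact mul_swap_eq_iff.mp (congrArg Prod.fst h).symm
  have hout : ∀ k, k ≠ i → k ≠ j → (s + d) k = s k := fun k hki hkj ↦ by
    simp [hd_out k hki hkj]
  have hsum : (s + d) i + (s + d) j = s i + s j := by
    simp only [Pi.add_apply]
    linear_combination hd
  rcases hij.ne.lt_or_gt with hlt | hgt
  · exact ⟨i, j, hlt, hij, rfl, hout, hsum⟩
  · refine ⟨j, i, hgt, hij.symm, by rw [swap_comm], fun k hkj hki ↦ hout k hki hkj, ?_⟩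
    rw [add_comm, hsum, add_comm]

variable (G) in
def permMoves : Subgroup (Perm (Fin n)) where
  carrier := {τ | ∀ σ s, (fromRel (etaAdj G)).Reachable (σ, s) (σ * τ, s)}
  one_mem' σ s := by rw [mul_one]
  mul_mem' {a b} ha hb σ s := mul_assoc σ a b ▸ (ha σ s).trans (hb (σ * a) s)
  inv_mem' {a} ha σ s := by simpa using (ha (σ * a⁻¹) s).symm

variable (G) in
def signMoves : AddSubgroup (Fin n → ZMod 2) where
  carrier := {d | ∀ σ s, (fromRel (etaAdj G)).Reachable (σ, s) (σ, s + d)}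
  zero_mem' σ s := by rw [add_zero]
  add_mem' {a b} ha hb σ s := add_assoc s a b ▸ (ha σ s).trans (hb σ (s + a))
  neg_mem' {a} ha σ s := by simpa using (ha σ (s + -a)).symm

theorem swap_mem_permMoves {i j : Fin n} (hij : G.Adj i j) : swap i j ∈ permMoves G :=
  fun σ s ↦ by
    simpa using (fromRel_etaAdj_adj_mul_swap hij σ s (d := 0) (by simp) (by simp)).reachable

theorem single_add_single_mem_signMoves {i j : Fin n} (hij : G.Adj i j) :
    Pi.single i 1 + Pi.single j 1 ∈ signMoves G := fun σ s ↦ by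
  have flip := fromRel_etaAdj_adj_mul_swap hij σ s (d := Pi.single i 1 + Pi.single j 1)
    (fun k hki hkj ↦ by simp [hki, hkj])
    (by simp [Pi.single_eq_of_ne hij.ne, Pi.single_eq_of_ne hij.ne.symm, ZModModule.add_self])
  have back := swap_mem_permMoves hij (σ * swap i j) (s + (Pi.single i 1 + Pi.single j 1))
  rw [mul_swap_mul_self] at back
  exact flip.reachable.trans back

theorem permMoves_eq_top (hG : G.Connected) : permMoves G = ⊤ := by
  rw [eq_top_iff, ← hG.closure_swap_adj_eq_top, Subgroup.closure_le]
  rintro _ ⟨i, j, hij, rfl⟩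
  exact swap_mem_permMoves hij

theorem mem_signMoves_of_sum_eq_zero (hG : G.Connected) {d : Fin n → ZMod 2}
    (hd : ∑ k, d k = 0) : d ∈ signMoves G :=
  (signMoves G).mem_of_sum_eq_zero
    (fun i j ↦ (hG i j).single_add_single_mem _ fun _ _ ↦ single_add_single_mem_signMoves) hd

theorem fromRel_etaAdj_reachable_of_sum_eq_zero (hG : G.Connected)
    {v : Perm (Fin n) × (Fin n → ZMod 2)} (hv : ∑ k, v.2 k = 0) :
    (fromRel (etaAdj G)).Reachable (1, 0) v := by
  obtain ⟨σ, s⟩ := v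
  have hσ : σ ∈ permMoves G := permMoves_eq_top hG ▸ Subgroup.mem_top σ
  have hs : s ∈ signMoves G := mem_signMoves_of_sum_eq_zero hG hv
  simpa using (hσ 1 0).trans (hs σ 0)

end Eta

/-- If `Γ` is connected, then the subgraph of `η` induced on the vertices of parity 0
(the GKM graph of `Q⁺_{Γ,λ}`) is connected. -/
theorem eta_plus_connected (n : ℕ) (G : SimpleGraph (Fin n)) (hG : G.Connected) :
    ((SimpleGraph.fromRel (etaAdj G)).induce
      {v : Equiv.Perm (Fin n) × (Fin n → ZMod 2) | ∑ k, v.2 k = 0}).Connected := by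
  set C := (fromRel (etaAdj G)).connectedComponentMk (1, 0)
  have hC : C.supp = {v | ∑ k, v.2 k = 0} := by
    ext v
    rw [ConnectedComponent.mem_supp_iff, ConnectedComponent.eq]
    refine ⟨fun h ↦ h.sum_eq_of_fromRel_etaAdj.trans (by simp), fun h ↦ ?_⟩
    exact (fromRel_etaAdj_reachable_of_sum_eq_zero hG h).symm
  rw [← hC]
  exact C.connected_toSimpleGraph
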